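/- Let (Γ,Ω) be a consistent pair with Γ⊢∃x φ(x). If c is a constant not appearing in any formula of Γ or Ω (nor in φ), then (Γ∪{φ(c)},Ω) is consistent. -/

import Mathlib

namespace FOFS

/-- A signature: constants, predicate symbols, and arities. -/
structure Signature where
  Const : Type
  Pred : Type
  arity : Pred → ℕ

/-- Terms: variables (indexed by naturals) or constants. -/
inductive Term (C : Type) where
  | var : ℕ → Term C
  | const : C → Term C

namespace Term

def fv {C : Type} : Term C → Set ℕ
  | var x => {x}
  | const _ => ∅

def consts {C : Type} : Term C → Set C
  | var _ => ∅
  | const c => {c}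

/-- Substitute the constant `c` for the variable `x`. -/
def substVC {C : Type} (x : ℕ) (c : C) : Term C → Term C
  | var y => if y = x then const c else var y
  | const d => const d

/-- Substitute the variable `x` for the constant `c`. -/
def substCV {C : Type} [DecidableEq C] (c : C) (x : ℕ) : Term C → Term C
  | var y => var y
  | const d => if d = c then var x else const d

end Term

/-- Formulas of the first-order intuitionistic modal language. -/
inductive Formula (σ : Signature) where
  | atom : (P : σ.Pred) → (Fin (σ.arity P) → Term σ.Const) → Formula σ
  | eq : Term σ.Const → Term σ.Const → Formula σ
  | and : Formula σ → Formula σ → Formula σ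
  | or : Formula σ → Formula σ → Formula σ
  | imp : Formula σ → Formula σ → Formula σ
  | box : Formula σ → Formula σ
  | dia : Formula σ → Formula σ
  | all : ℕ → Formula σ → Formula σ
  | ex : ℕ → Formula σ → Formula σ
  | bot : Formula σ

namespace Formula

variable {σ : Signature}

def neg (φ : Formula σ) : Formula σ := φ.imp .bot

def top : Formula σ := Formula.bot.imp .bot

/-- Free variables of a formula. -/
def fv : Formula σ → Set ℕ
  | atom _ ts => ⋃ i, (ts i).fv
  | eq s t => s.fv ∪ t.fv
  | and φ ψ => φ.fv ∪ ψ.fv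
  | or φ ψ => φ.fv ∪ ψ.fv
  | imp φ ψ => φ.fv ∪ ψ.fv
  | box φ => φ.fv
  | dia φ => φ.fv
  | all x φ => φ.fv \ {x}
  | ex x φ => φ.fv \ {x}
  | bot => ∅

/-- All variables occurring in a formula (free, bound, or as a binder). -/
def vars : Formula σ → Set ℕ
  | atom _ ts => ⋃ i, (ts i).fv
  | eq s t => s.fv ∪ t.fv
  | and φ ψ => φ.vars ∪ ψ.vars
  | or φ ψ => φ.vars ∪ ψ.vars
  | imp φ ψ => φ.vars ∪ ψ.vars
  | box φ => φ.vars
  | dia φ => φ.vars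
  | all x φ => insert x φ.vars
  | ex x φ => insert x φ.vars
  | bot => ∅

/-- Constants occurring in a formula. -/
def consts : Formula σ → Set σ.Const
  | atom _ ts => ⋃ i, (ts i).consts
  | eq s t => s.consts ∪ t.consts
  | and φ ψ => φ.consts ∪ ψ.consts
  | or φ ψ => φ.consts ∪ ψ.consts
  | imp φ ψ => φ.consts ∪ ψ.consts
  | box φ => φ.consts
  | dia φ => φ.consts
  | all _ φ => φ.consts
  | ex _ φ => φ.consts
  | bot => ∅

/-- Substitute the constant `c` for free occurrences of the variable `x`. -/
def substVC (x : ℕ) (c : σ.Const) : Formula σ → Formula σ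
  | atom P ts => atom P (fun i => (ts i).substVC x c)
  | eq s t => eq (s.substVC x c) (t.substVC x c)
  | and φ ψ => and (φ.substVC x c) (ψ.substVC x c)
  | or φ ψ => or (φ.substVC x c) (ψ.substVC x c)
  | imp φ ψ => imp (φ.substVC x c) (ψ.substVC x c)
  | box φ => box (φ.substVC x c)
  | dia φ => dia (φ.substVC x c)
  | all y φ => if y = x then all y φ else all y (φ.substVC x c)
  | ex y φ => if y = x then ex y φ else ex y (φ.substVC x c)
  | bot => bot

/-- Substitute the variable `x` for all occurrences of the constant `c`. -/
def substCV [DecidableEq σ.Const] (c : σ.Const) (x : ℕ) : Formula σ → Formula σ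
  | atom P ts => atom P (fun i => (ts i).substCV c x)
  | eq s t => eq (s.substCV c x) (t.substCV c x)
  | and φ ψ => and (φ.substCV c x) (ψ.substCV c x)
  | or φ ψ => or (φ.substCV c x) (ψ.substCV c x)
  | imp φ ψ => imp (φ.substCV c x) (ψ.substCV c x)
  | box φ => box (φ.substCV c x)
  | dia φ => dia (φ.substCV c x)
  | all y φ => all y (φ.substCV c x)
  | ex y φ => ex y (φ.substCV c x)
  | bot => bot

/-- Modal-free formulas. -/
def ModalFree : Formula σ → Prop
  | atom _ _ => True
  | eq _ _ => True
  | and φ ψ => φ.ModalFree ∧ ψ.ModalFree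
  | or φ ψ => φ.ModalFree ∧ ψ.ModalFree
  | imp φ ψ => φ.ModalFree ∧ ψ.ModalFree
  | box _ => False
  | dia _ => False
  | all _ φ => φ.ModalFree
  | ex _ φ => φ.ModalFree
  | bot => True

/-- A sentence is a formula with no free variables. -/
def Sentence (φ : Formula σ) : Prop := φ.fv = ∅

end Formula

/-- The Hilbert system for first-order Fischer Servi logic, parametrized by an
extra set of axioms `Ax` (take `Ax = NoAx` for the base logic `FOFS`). -/
inductive Prv {σ : Signature} (Ax : Formula σ → Prop) : Formula σ → Prop
  | extraAx {φ : Formula σ} : Ax φ → Prv Ax φ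
  -- intuitionistic propositional axioms (substitution instances of IPC theorems)
  | a1 (φ ψ : Formula σ) : Prv Ax (φ.imp (ψ.imp φ))
  | a2 (φ ψ χ : Formula σ) :
      Prv Ax ((φ.imp (ψ.imp χ)).imp ((φ.imp ψ).imp (φ.imp χ)))
  | andI (φ ψ : Formula σ) : Prv Ax (φ.imp (ψ.imp (φ.and ψ)))
  | andE1 (φ ψ : Formula σ) : Prv Ax ((φ.and ψ).imp φ)
  | andE2 (φ ψ : Formula σ) : Prv Ax ((φ.and ψ).imp ψ)
  | orI1 (φ ψ : Formula σ) : Prv Ax (φ.imp (φ.or ψ))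
  | orI2 (φ ψ : Formula σ) : Prv Ax (ψ.imp (φ.or ψ))
  | orE (φ ψ χ : Formula σ) :
      Prv Ax ((φ.imp χ).imp ((ψ.imp χ).imp ((φ.or ψ).imp χ)))
  | exFalso (φ : Formula σ) : Prv Ax (Formula.bot.imp φ)
  -- K axioms
  | kBoxA1 (φ ψ : Formula σ) :
      Prv Ax ((Formula.box (φ.and ψ)).imp ((Formula.box φ).and (Formula.box ψ)))
  | kBoxA2 (φ ψ : Formula σ) :
      Prv Ax (((Formula.box φ).and (Formula.box ψ)).imp (Formula.box (φ.and ψ)))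
  | kBoxB : Prv Ax (Formula.box Formula.top)
  | kDiaA1 (φ ψ : Formula σ) :
      Prv Ax ((Formula.dia (φ.or ψ)).imp ((Formula.dia φ).or (Formula.dia ψ)))
  | kDiaA2 (φ ψ : Formula σ) :
      Prv Ax (((Formula.dia φ).or (Formula.dia ψ)).imp (Formula.dia (φ.or ψ)))
  | kDiaB : Prv Ax (Formula.neg (Formula.dia Formula.bot))
  -- Fischer Servi axioms
  | fs1 (φ ψ : Formula σ) :
      Prv Ax (((Formula.dia φ).imp (Formula.box ψ)).imp (Formula.box (φ.imp ψ)))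
  | fs2 (φ ψ : Formula σ) :
      Prv Ax ((Formula.dia (φ.imp ψ)).imp ((Formula.box φ).imp (Formula.dia ψ)))
  -- quantifier axioms
  | univ (x : ℕ) (c : σ.Const) (φ : Formula σ) :
      Prv Ax ((Formula.all x φ).imp (φ.substVC x c))
  | exist (x : ℕ) (c : σ.Const) (φ : Formula σ) :
      Prv Ax ((φ.substVC x c).imp (Formula.ex x φ))
  | allAnt {x : ℕ} {ψ : Formula σ} (φ : Formula σ) : x ∉ ψ.fv →
      Prv Ax ((Formula.all x (φ.imp ψ)).imp ((Formula.ex x φ).imp ψ))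
  | allCon {x : ℕ} {φ : Formula σ} (ψ : Formula σ) : x ∉ φ.fv →
      Prv Ax ((Formula.all x (φ.imp ψ)).imp (φ.imp (Formula.all x ψ)))
  -- identity axioms
  | idRef (c : σ.Const) : Prv Ax (Formula.eq (Term.const c) (Term.const c))
  | idSub {φ : Formula σ} (x : ℕ) (c₁ c₂ : σ.Const) : φ.ModalFree →
      Prv Ax ((Formula.eq (Term.const c₁) (Term.const c₂)).imp
        ((φ.substVC x c₁).imp (φ.substVC x c₂)))
  -- rules
  | mp {φ ψ : Formula σ} : Prv Ax (φ.imp ψ) → Prv Ax φ → Prv Ax ψ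
  | gen {φ : Formula σ} {x : ℕ} {c : σ.Const} : c ∉ φ.consts →
      Prv Ax (φ.substVC x c) → Prv Ax (Formula.all x φ)
  | regBox {φ ψ : Formula σ} : Prv Ax (φ.imp ψ) →
      Prv Ax ((Formula.box φ).imp (Formula.box ψ))
  | regDia {φ ψ : Formula σ} : Prv Ax (φ.imp ψ) →
      Prv Ax ((Formula.dia φ).imp (Formula.dia ψ))

/-- No extra axioms: the base logic `FOFS`. -/
def NoAx {σ : Signature} : Formula σ → Prop := fun _ => False

/-- The extra axiom `D : □φ → ◇φ`. -/
def DAx {σ : Signature} : Formula σ → Prop :=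
  fun χ => ∃ φ : Formula σ, χ = (Formula.box φ).imp (Formula.dia φ)

/-- Conjunction of a finite list of formulas. -/
def conjList {σ : Signature} (L : List (Formula σ)) : Formula σ :=
  L.foldr Formula.and Formula.top

/-- Disjunction of a finite list of formulas. -/
def disjList {σ : Signature} (L : List (Formula σ)) : Formula σ :=
  L.foldr Formula.or Formula.bot

/-- `Γ ⊢ φ`: some finite conjunction of members of `Γ` provably implies `φ`. -/
def ProvesFrom {σ : Signature} (Ax : Formula σ → Prop)
    (Γ : Set (Formula σ)) (φ : Formula σ) : Prop :=
  ∃ L : List (Formula σ), (∀ γ ∈ L, γ ∈ Γ) ∧ Prv Ax ((conjList L).imp φ)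

/-- The pair `(Γ, Ω)` is consistent: no finite disjunction of members of `Ω`
is derivable from `Γ`. -/
def PairConsistent {σ : Signature} (Ax : Formula σ → Prop)
    (Γ Ω : Set (Formula σ)) : Prop :=
  ¬ ∃ L : List (Formula σ), (∀ γ ∈ L, γ ∈ Ω) ∧ ProvesFrom Ax Γ (disjList L)

/-- A saturated theory over the language whose constants are drawn from `K`:
a consistent, deductively closed, prime, Henkin set of sentences. -/
structure SaturatedIn {σ : Signature} (Ax : Formula σ → Prop)
    (K : Set σ.Const) (Γ : Set (Formula σ)) : Prop where
  inLang : ∀ φ ∈ Γ, Formula.Sentence φ ∧ Formula.consts φ ⊆ K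
  consistent : ¬ ProvesFrom Ax Γ Formula.bot
  dclosed : ∀ φ : Formula σ, Formula.Sentence φ → Formula.consts φ ⊆ K →
    ProvesFrom Ax Γ φ → φ ∈ Γ
  prime : ∀ φ ψ : Formula σ, φ.or ψ ∈ Γ → φ ∈ Γ ∨ ψ ∈ Γ
  henkin : ∀ (x : ℕ) (φ : Formula σ), Formula.ex x φ ∈ Γ →
    ∃ c ∈ K, φ.substVC x c ∈ Γ

/-- `□⁻Γ = {φ : □φ ∈ Γ}`. -/
def BoxSet {σ : Signature} (Γ : Set (Formula σ)) : Set (Formula σ) :=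
  {φ | Formula.box φ ∈ Γ}

/-- `◇̄Γ = {φ ∈ L(K) : ◇φ ∉ Γ}`. -/
def NDSet {σ : Signature} (K : Set σ.Const) (Γ : Set (Formula σ)) :
    Set (Formula σ) :=
  {φ | Formula.Sentence φ ∧ Formula.consts φ ⊆ K ∧ Formula.dia φ ∉ Γ}


section Lemmas

open Formula

variable {σ : Signature} {Ax : Formula σ → Prop}

namespace Term

variable {C : Type}

lemma fv_finite (t : Term C) : t.fv.Finite := by
  cases t <;> simp [fv]

lemma substVC_of_not_mem_fv {t : Term C} {x : ℕ} {c : C} (h : x ∉ t.fv) :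
    t.substVC x c = t := by
  cases t with
  | var y =>
      simp only [fv, Set.mem_singleton_iff] at h
      have hyx : y ≠ x := fun e => h e.symm
      simp [substVC, hyx]
  | const d => rfl

lemma fv_substVC (t : Term C) (x : ℕ) (c : C) :
    (t.substVC x c).fv ⊆ t.fv \ {x} := by
  cases t with
  | var y =>
      by_cases h : y = x <;> simp [substVC, fv, h]
  | const d => simp [substVC, fv]

lemma fv_substCV [DecidableEq C] (t : Term C) (c : C) (y : ℕ) :
    (t.substCV c y).fv ⊆ t.fv ∪ {y} := by
  cases t with
  | var z => simp [substCV, fv]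
  | const d => by_cases h : d = c <;> simp [substCV, fv, h]

lemma consts_substCV [DecidableEq C] (t : Term C) (c : C) (y : ℕ) :
    c ∉ (t.substCV c y).consts := by
  cases t with
  | var z => simp [substCV, consts]
  | const d =>
      by_cases h : d = c <;> simp [substCV, consts, h]
      exact fun e => h e.symm

lemma substCV_substVC [DecidableEq C] {t : Term C} {c : C} {y : ℕ}
    (h : y ∉ t.fv) : (t.substCV c y).substVC y c = t := by
  cases t with
  | var z =>
      simp only [fv, Set.mem_singleton_iff] at h
      have hzy : z ≠ y := fun e => h e.symm
      simp [substCV, substVC, hzy]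
  | const d =>
      by_cases hd : d = c <;> simp [substCV, substVC, hd]

end Term

namespace Formula

lemma vars_finite (φ : Formula σ) : φ.vars.Finite := by
  induction φ with
  | atom P ts => exact Set.finite_iUnion fun i => Term.fv_finite _
  | eq s t => exact (Term.fv_finite s).union (Term.fv_finite t)
  | and φ ψ ihφ ihψ => exact ihφ.union ihψ
  | or φ ψ ihφ ihψ => exact ihφ.union ihψ
  | imp φ ψ ihφ ihψ => exact ihφ.union ihψ
  | box φ ih => exact ih
  | dia φ ih => exact ih
  | all y φ ih => exact ih.insert y
  | ex y φ ih => exact ih.insert y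
  | bot => exact Set.finite_empty

lemma fv_subset_vars (φ : Formula σ) : φ.fv ⊆ φ.vars := by
  induction φ with
  | atom P ts => exact le_refl _
  | eq s t => exact le_refl _
  | and φ ψ ihφ ihψ => exact Set.union_subset_union ihφ ihψ
  | or φ ψ ihφ ihψ => exact Set.union_subset_union ihφ ihψ
  | imp φ ψ ihφ ihψ => exact Set.union_subset_union ihφ ihψ
  | box φ ih => exact ih
  | dia φ ih => exact ih
  | all y φ ih => exact (Set.diff_subset.trans ih).trans (Set.subset_insert _ _)
  | ex y φ ih => exact (Set.diff_subset.trans ih).trans (Set.subset_insert _ _)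
  | bot => exact le_refl _

lemma fv_finite (φ : Formula σ) : φ.fv.Finite :=
  (vars_finite φ).subset (fv_subset_vars φ)

lemma substVC_of_not_mem_fv {φ : Formula σ} {x : ℕ} {c : σ.Const}
    (h : x ∉ φ.fv) : φ.substVC x c = φ := by
  induction φ with
  | atom P ts =>
      simp only [fv, Set.mem_iUnion, not_exists] at h
      simp only [substVC]
      exact congrArg _ (funext fun i => Term.substVC_of_not_mem_fv (h i))
  | eq s t =>
      simp only [fv, Set.mem_union, not_or] at h
      simp [substVC, Term.substVC_of_not_mem_fv h.1, Term.substVC_of_not_mem_fv h.2]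
  | and φ ψ ihφ ihψ =>
      simp only [fv, Set.mem_union, not_or] at h
      simp [substVC, ihφ h.1, ihψ h.2]
  | or φ ψ ihφ ihψ =>
      simp only [fv, Set.mem_union, not_or] at h
      simp [substVC, ihφ h.1, ihψ h.2]
  | imp φ ψ ihφ ihψ =>
      simp only [fv, Set.mem_union, not_or] at h
      simp [substVC, ihφ h.1, ihψ h.2]
  | box φ ih => simp only [fv] at h; simp [substVC, ih h]
  | dia φ ih => simp only [fv] at h; simp [substVC, ih h]
  | all y φ ih =>
      by_cases hy : y = x
      · simp [substVC, hy]
      · simp only [fv, Set.mem_diff, Set.mem_singleton_iff, not_and, not_not] at h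
        have hx : x ∉ φ.fv := fun hx => hy ((h hx).symm)
        simp [substVC, hy, ih hx]
  | ex y φ ih =>
      by_cases hy : y = x
      · simp [substVC, hy]
      · simp only [fv, Set.mem_diff, Set.mem_singleton_iff, not_and, not_not] at h
        have hx : x ∉ φ.fv := fun hx => hy ((h hx).symm)
        simp [substVC, hy, ih hx]
  | bot => rfl

lemma fv_substVC (φ : Formula σ) (x : ℕ) (c : σ.Const) :
    (φ.substVC x c).fv ⊆ φ.fv \ {x} := by
  induction φ with
  | atom P ts =>
      simp only [substVC, fv]
      exact Set.iUnion_subset fun i =>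
        (Term.fv_substVC _ _ _).trans (Set.diff_subset_diff_left (Set.subset_iUnion (fun j => (ts j).fv) i))
  | eq s t =>
      simp only [substVC, fv]
      refine Set.union_subset ?_ ?_
      · exact (Term.fv_substVC _ _ _).trans
          (Set.diff_subset_diff_left Set.subset_union_left)
      · exact (Term.fv_substVC _ _ _).trans
          (Set.diff_subset_diff_left Set.subset_union_right)
  | and φ ψ ihφ ihψ =>
      simp only [substVC, fv]
      refine Set.union_subset ?_ ?_
      · exact ihφ.trans (Set.diff_subset_diff_left Set.subset_union_left)
      · exact ihψ.trans (Set.diff_subset_diff_left Set.subset_union_right)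
  | or φ ψ ihφ ihψ =>
      simp only [substVC, fv]
      refine Set.union_subset ?_ ?_
      · exact ihφ.trans (Set.diff_subset_diff_left Set.subset_union_left)
      · exact ihψ.trans (Set.diff_subset_diff_left Set.subset_union_right)
  | imp φ ψ ihφ ihψ =>
      simp only [substVC, fv]
      refine Set.union_subset ?_ ?_
      · exact ihφ.trans (Set.diff_subset_diff_left Set.subset_union_left)
      · exact ihψ.trans (Set.diff_subset_diff_left Set.subset_union_right)
  | box φ ih => exact ih
  | dia φ ih => exact ih
  | all y φ ih =>
      by_cases hy : y = x
      · subst hy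
        simp only [substVC, if_pos rfl, fv]
        intro a ha
        exact ⟨ha, ha.2⟩
      · simp only [substVC, if_neg hy, fv]
        intro a ha
        have := ih ha.1
        exact ⟨⟨this.1, ha.2⟩, this.2⟩
  | ex y φ ih =>
      by_cases hy : y = x
      · subst hy
        simp only [substVC, if_pos rfl, fv]
        intro a ha
        exact ⟨ha, ha.2⟩
      · simp only [substVC, if_neg hy, fv]
        intro a ha
        have := ih ha.1
        exact ⟨⟨this.1, ha.2⟩, this.2⟩
  | bot => simp [substVC, fv]

lemma vars_substVC (φ : Formula σ) (x : ℕ) (c : σ.Const) :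
    (φ.substVC x c).vars ⊆ φ.vars := by
  induction φ with
  | atom P ts =>
      simp only [substVC, vars]
      exact Set.iUnion_subset fun i =>
        ((Term.fv_substVC _ _ _).trans Set.diff_subset).trans (Set.subset_iUnion (fun j => (ts j).fv) i)
  | eq s t =>
      simp only [substVC, vars]
      exact Set.union_subset
        (((Term.fv_substVC _ _ _).trans Set.diff_subset).trans Set.subset_union_left)
        (((Term.fv_substVC _ _ _).trans Set.diff_subset).trans Set.subset_union_right)
  | and φ ψ ihφ ihψ =>
      simp only [substVC, vars]
      exact Set.union_subset (ihφ.trans Set.subset_union_left)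
        (ihψ.trans Set.subset_union_right)
  | or φ ψ ihφ ihψ =>
      simp only [substVC, vars]
      exact Set.union_subset (ihφ.trans Set.subset_union_left)
        (ihψ.trans Set.subset_union_right)
  | imp φ ψ ihφ ihψ =>
      simp only [substVC, vars]
      exact Set.union_subset (ihφ.trans Set.subset_union_left)
        (ihψ.trans Set.subset_union_right)
  | box φ ih => exact ih
  | dia φ ih => exact ih
  | all y φ ih =>
      by_cases hy : y = x
      · simp [substVC, hy]
      · simp only [substVC, if_neg hy, vars]
        exact Set.insert_subset_insert ih
  | ex y φ ih =>
      by_cases hy : y = x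
      · simp [substVC, hy]
      · simp only [substVC, if_neg hy, vars]
        exact Set.insert_subset_insert ih
  | bot => simp [substVC, vars]

variable [DecidableEq σ.Const]

lemma fv_substCV (φ : Formula σ) (c : σ.Const) (y : ℕ) :
    (φ.substCV c y).fv ⊆ φ.fv ∪ {y} := by
  induction φ with
  | atom P ts =>
      simp only [substCV, fv]
      refine Set.iUnion_subset fun i => (Term.fv_substCV _ _ _).trans ?_
      exact Set.union_subset_union_left _ (Set.subset_iUnion (fun j => (ts j).fv) i)
  | eq s t =>
      simp only [substCV, fv]
      refine Set.union_subset ?_ ?_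
      · exact (Term.fv_substCV _ _ _).trans
          (Set.union_subset_union_left _ Set.subset_union_left)
      · exact (Term.fv_substCV _ _ _).trans
          (Set.union_subset_union_left _ Set.subset_union_right)
  | and φ ψ ihφ ihψ =>
      simp only [substCV, fv]
      exact Set.union_subset
        (ihφ.trans (Set.union_subset_union_left _ Set.subset_union_left))
        (ihψ.trans (Set.union_subset_union_left _ Set.subset_union_right))
  | or φ ψ ihφ ihψ =>
      simp only [substCV, fv]
      exact Set.union_subset
        (ihφ.trans (Set.union_subset_union_left _ Set.subset_union_left))
        (ihψ.trans (Set.union_subset_union_left _ Set.subset_union_right))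
  | imp φ ψ ihφ ihψ =>
      simp only [substCV, fv]
      exact Set.union_subset
        (ihφ.trans (Set.union_subset_union_left _ Set.subset_union_left))
        (ihψ.trans (Set.union_subset_union_left _ Set.subset_union_right))
  | box φ ih => exact ih
  | dia φ ih => exact ih
  | all z φ ih =>
      simp only [substCV, fv]
      intro a ha
      rcases ih ha.1 with h | h
      · exact Or.inl ⟨h, ha.2⟩
      · exact Or.inr h
  | ex z φ ih =>
      simp only [substCV, fv]
      intro a ha
      rcases ih ha.1 with h | h
      · exact Or.inl ⟨h, ha.2⟩
      · exact Or.inr h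
  | bot => simp [substCV, fv]

lemma consts_substCV (φ : Formula σ) (c : σ.Const) (y : ℕ) :
    c ∉ (φ.substCV c y).consts := by
  induction φ with
  | atom P ts =>
      simp only [substCV, consts, Set.mem_iUnion, not_exists]
      exact fun i => Term.consts_substCV _ _ _
  | eq s t =>
      simp only [substCV, consts, Set.mem_union, not_or]
      exact ⟨Term.consts_substCV _ _ _, Term.consts_substCV _ _ _⟩
  | and φ ψ ihφ ihψ =>
      simp only [substCV, consts, Set.mem_union, not_or]
      exact ⟨ihφ, ihψ⟩
  | or φ ψ ihφ ihψ =>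
      simp only [substCV, consts, Set.mem_union, not_or]
      exact ⟨ihφ, ihψ⟩
  | imp φ ψ ihφ ihψ =>
      simp only [substCV, consts, Set.mem_union, not_or]
      exact ⟨ihφ, ihψ⟩
  | box φ ih => exact ih
  | dia φ ih => exact ih
  | all z φ ih => exact ih
  | ex z φ ih => exact ih
  | bot => simp [substCV, consts]

lemma substCV_substVC {φ : Formula σ} {c : σ.Const} {y : ℕ}
    (h : y ∉ φ.vars) : (φ.substCV c y).substVC y c = φ := by
  induction φ with
  | atom P ts =>
      simp only [vars, Set.mem_iUnion, not_exists] at h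
      simp only [substCV, substVC]
      exact congrArg _ (funext fun i => Term.substCV_substVC (h i))
  | eq s t =>
      simp only [vars, Set.mem_union, not_or] at h
      simp [substCV, substVC, Term.substCV_substVC h.1, Term.substCV_substVC h.2]
  | and φ ψ ihφ ihψ =>
      simp only [vars, Set.mem_union, not_or] at h
      simp [substCV, substVC, ihφ h.1, ihψ h.2]
  | or φ ψ ihφ ihψ =>
      simp only [vars, Set.mem_union, not_or] at h
      simp [substCV, substVC, ihφ h.1, ihψ h.2]
  | imp φ ψ ihφ ihψ =>
      simp only [vars, Set.mem_union, not_or] at h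
      simp [substCV, substVC, ihφ h.1, ihψ h.2]
  | box φ ih => simp only [vars] at h; simp [substCV, substVC, ih h]
  | dia φ ih => simp only [vars] at h; simp [substCV, substVC, ih h]
  | all z φ ih =>
      simp only [vars, Set.mem_insert_iff, not_or] at h
      have hz : z ≠ y := fun e => h.1 e.symm
      simp [substCV, substVC, hz, ih h.2]
  | ex z φ ih =>
      simp only [vars, Set.mem_insert_iff, not_or] at h
      have hz : z ≠ y := fun e => h.1 e.symm
      simp [substCV, substVC, hz, ih h.2]
  | bot => rfl

end Formula

lemma prv_id (φ : Formula σ) : Prv Ax (φ.imp φ) :=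
  Prv.mp (Prv.mp (Prv.a2 φ (φ.imp φ) φ) (Prv.a1 φ (φ.imp φ))) (Prv.a1 φ φ)

lemma prv_top : Prv Ax (Formula.top : Formula σ) := prv_id _

lemma prv_imp_intro {φ ψ : Formula σ} (h : Prv Ax ψ) : Prv Ax (φ.imp ψ) :=
  Prv.mp (Prv.a1 ψ φ) h

lemma prv_trans {φ ψ χ : Formula σ} (h1 : Prv Ax (φ.imp ψ))
    (h2 : Prv Ax (ψ.imp χ)) : Prv Ax (φ.imp χ) :=
  Prv.mp (Prv.mp (Prv.a2 φ ψ χ) (prv_imp_intro h2)) h1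

lemma prv_ap {φ ψ χ : Formula σ} (h1 : Prv Ax (φ.imp (ψ.imp χ)))
    (h2 : Prv Ax (φ.imp ψ)) : Prv Ax (φ.imp χ) :=
  Prv.mp (Prv.mp (Prv.a2 φ ψ χ) h1) h2

lemma prv_export {φ ψ χ : Formula σ} (h : Prv Ax ((φ.and ψ).imp χ)) :
    Prv Ax (φ.imp (ψ.imp χ)) :=
  prv_trans (Prv.andI φ ψ)
    (Prv.mp (Prv.a2 ψ (φ.and ψ) χ) (prv_imp_intro h))

lemma prv_conj_intro {β : Formula σ} {L : List (Formula σ)}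
    (h : ∀ γ ∈ L, Prv Ax (β.imp γ)) : Prv Ax (β.imp (conjList L)) := by
  induction L with
  | nil => exact prv_imp_intro prv_top
  | cons γ L ih =>
      have h1 := h γ (List.mem_cons_self)
      have h2 := ih fun γ' hγ' => h γ' (List.mem_cons_of_mem _ hγ')
      exact prv_ap (prv_trans h1 (Prv.andI γ (conjList L))) h2

lemma prv_conj_elim {L : List (Formula σ)} {γ : Formula σ} (h : γ ∈ L) :
    Prv Ax ((conjList L).imp γ) := by
  induction L with
  | nil => exact absurd h List.not_mem_nil
  | cons δ L ih =>
      rcases List.mem_cons.mp h with rfl | h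
      · exact Prv.andE1 _ _
      · exact prv_trans (Prv.andE2 δ (conjList L)) (ih h)

lemma consts_conjList {c : σ.Const} {L : List (Formula σ)}
    (h : ∀ γ ∈ L, c ∉ γ.consts) : c ∉ (conjList L).consts := by
  induction L with
  | nil => simp [conjList, Formula.consts, Formula.top]
  | cons γ L ih =>
      have := h γ (List.mem_cons_self)
      have h2 := ih fun γ' hγ' => h γ' (List.mem_cons_of_mem _ hγ')
      simp only [conjList, List.foldr_cons, Formula.consts, Set.mem_union, not_or]
      exact ⟨this, h2⟩

lemma consts_disjList {c : σ.Const} {L : List (Formula σ)}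
    (h : ∀ γ ∈ L, c ∉ γ.consts) : c ∉ (disjList L).consts := by
  induction L with
  | nil => simp [disjList, Formula.consts]
  | cons γ L ih =>
      have := h γ (List.mem_cons_self)
      have h2 := ih fun γ' hγ' => h γ' (List.mem_cons_of_mem _ hγ')
      simp only [disjList, List.foldr_cons, Formula.consts, Set.mem_union, not_or]
      exact ⟨this, h2⟩

end Lemmas


end FOFS

open FOFS Formula in
/-- if `(Γ,Ω)` is consistent, `Γ ⊢ ∃x φ(x)`, and `c` is a
constant appearing in no formula of `Γ` or `Ω` (nor in `φ`), then
`(Γ∪{φ(c)},Ω)` is consistent. -/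
theorem stmt10 {σ : Signature} (Γ Ω : Set (Formula σ)) (x : ℕ)
    (φ : Formula σ) (c : σ.Const)
    (hcon : PairConsistent NoAx Γ Ω)
    (hex : ProvesFrom NoAx Γ (Formula.ex x φ))
    (hcΓ : ∀ γ ∈ Γ, c ∉ γ.consts)
    (hcΩ : ∀ ω ∈ Ω, c ∉ ω.consts)
    (hcφ : c ∉ φ.consts) :
    PairConsistent NoAx (Γ ∪ {φ.substVC x c}) Ω := by
  classical
  rintro ⟨LΩ, hLΩ, L', hL', hprf⟩
  obtain ⟨M, hM, hMprf⟩ := hex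
  set α : Formula σ := φ.substVC x c with hα
  set δ : Formula σ := disjList LΩ with hδ
  set L'' : List (Formula σ) := L'.filter (fun γ => decide (γ ∈ Γ)) with hL''def
  have hL''mem : ∀ γ ∈ L'', γ ∈ Γ := fun γ hγ =>
    of_decide_eq_true (List.mem_filter.mp hγ).2
  set ψ : Formula σ := (conjList L'').imp δ with hψ
  have hc1 : c ∉ (conjList L'').consts :=
    consts_conjList fun γ hγ => hcΓ γ (hL''mem γ hγ)
  have hc2 : c ∉ δ.consts := consts_disjList fun γ hγ => hcΩ γ (hLΩ γ hγ)
  have hcψ : c ∉ ψ.consts := by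
    simp only [hψ, Formula.consts, Set.mem_union, not_or]
    exact ⟨hc1, hc2⟩
  -- Prv (α → ψ)
  have hαψ : Prv NoAx (α.imp ψ) := by
    have hb : ∀ γ ∈ L', Prv NoAx ((α.and (conjList L'')).imp γ) := by
      intro γ hγ
      by_cases hΓ : γ ∈ Γ
      · have hmem : γ ∈ L'' := List.mem_filter.mpr ⟨hγ, decide_eq_true hΓ⟩
        exact prv_trans (Prv.andE2 _ _) (prv_conj_elim hmem)
      · have hγα : γ = α := by
          rcases hL' γ hγ with h | h
          · exact absurd h hΓ
          · simpa using h
        subst hγα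
        exact Prv.andE1 _ _
    exact prv_export (prv_trans (prv_conj_intro hb) hprf)
  -- pick a fresh variable y
  have hfin : (φ.vars ∪ ψ.fv ∪ {x}).Finite :=
    (φ.vars_finite.union ψ.fv_finite).union (Set.finite_singleton x)
  obtain ⟨y, hy⟩ := Set.Infinite.nonempty hfin.infinite_compl
  simp only [Set.mem_compl_iff, Set.mem_union, Set.mem_singleton_iff, not_or] at hy
  obtain ⟨⟨hyφ, hyψ⟩, hyx⟩ := hy
  have hyα : y ∉ α.vars := fun h => hyφ (Formula.vars_substVC φ x c h)
  set φ' : Formula σ := α.substCV c y with hφ'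
  have hφ'c : c ∉ φ'.consts := Formula.consts_substCV α c y
  have hsub : φ'.substVC y c = α := Formula.substCV_substVC hyα
  have hxα : x ∉ α.fv := fun h => (Formula.fv_substVC φ x c h).2 rfl
  have hxex : x ∉ (Formula.ex y φ').fv := by
    simp only [Formula.fv, Set.mem_diff, Set.mem_singleton_iff, not_and, not_not]
    intro hx
    rcases Formula.fv_substCV α c y hx with h | h
    · exact absurd h hxα
    · exact Set.mem_singleton_iff.mp h
  -- Prv ((ex x φ) → (ex y φ'))
  have e1 : Prv NoAx (α.imp (Formula.ex y φ')) := hsub ▸ Prv.exist y c φ'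
  have hθsub : (φ.imp (Formula.ex y φ')).substVC x c = α.imp (Formula.ex y φ') := by
    show Formula.imp (φ.substVC x c) ((Formula.ex y φ').substVC x c) = _
    rw [Formula.substVC_of_not_mem_fv hxex]
  have hgen1 : Prv NoAx (Formula.all x (φ.imp (Formula.ex y φ'))) := by
    refine Prv.gen ?_ (hθsub ▸ e1)
    simp only [Formula.consts, Set.mem_union, not_or]
    exact ⟨hcφ, hφ'c⟩
  have hexx : Prv NoAx ((Formula.ex x φ).imp (Formula.ex y φ')) :=
    Prv.mp (Prv.allAnt φ hxex) hgen1
  -- Prv ((ex y φ') → ψ)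
  have hχsub : (φ'.imp ψ).substVC y c = α.imp ψ := by
    show Formula.imp (φ'.substVC y c) (ψ.substVC y c) = _
    rw [hsub, Formula.substVC_of_not_mem_fv hyψ]
  have hgen2 : Prv NoAx (Formula.all y (φ'.imp ψ)) := by
    refine Prv.gen ?_ (hχsub ▸ hαψ)
    simp only [Formula.consts, Set.mem_union, not_or]
    exact ⟨hφ'c, hcψ⟩
  have hey : Prv NoAx ((Formula.ex y φ').imp ψ) :=
    Prv.mp (Prv.allAnt φ' hyψ) hgen2
  -- combine
  have hMψ : Prv NoAx ((conjList M).imp ψ) :=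
    prv_trans (prv_trans hMprf hexx) hey
  set N : List (Formula σ) := M ++ L'' with hN
  have hNM : Prv NoAx ((conjList N).imp (conjList M)) :=
    prv_conj_intro fun γ h => prv_conj_elim (List.mem_append_left _ h)
  have hNL : Prv NoAx ((conjList N).imp (conjList L'')) :=
    prv_conj_intro fun γ h => prv_conj_elim (List.mem_append_right _ h)
  have hNδ : Prv NoAx ((conjList N).imp δ) :=
    prv_ap (prv_trans hNM hMψ) hNL
  exact hcon ⟨LΩ, hLΩ, N, fun γ h => by
    rcases List.mem_append.mp h with h | h
    · exact hM γ h
    · exact hL''mem γ h, hNδ⟩
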